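/- Let G be a finite weighted DAG, let P ∈ Π(s1, t1), let x, y ∈ V(P) with x preceding y on P, and suppose dist(s1, y) − dist(s1, x) = dist(s2, y) − dist(s2, x). Let Qx ∈ Π(s2, t2) be a shortest path containing x and Qy ∈ Π(s2, t2) a shortest path containing y. Then the concatenation Qx[s2, x] · P[x, y] · Qy[y, t2] is a shortest path from s2 to t2. -/

import Mathlib

/-!
In a DAG a subpath of a shortest path is shortest: splicing a lighter detour into it would give
a lighter walk, and every walk in a DAG is a path. Hence `P[x, y]` weighs
`dist(s1, y) - dist(s1, x) = dist(s2, y) - dist(s2, x)`, so `Qx[s2, x] · P[x, y]` weighs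
`dist(s2, y)`, exactly as much as `Qy[s2, y]`; the concatenation therefore weighs as much as `Qy`.
-/

open scoped BigOperators

namespace DSP

variable {V : Type*} [Fintype V] [DecidableEq V]

/-- A path: a nonempty list of distinct vertices in which each consecutive
pair is joined by a directed edge. -/
def IsPath (E : V → V → Prop) (p : List V) : Prop :=
  p ≠ [] ∧ p.Nodup ∧ p.Chain' E

/-- A path from `x` to `y`. -/
def IsPathFrom (E : V → V → Prop) (p : List V) (x y : V) : Prop :=
  IsPath E p ∧ p.head? = some x ∧ p.getLast? = some y

/-- The (ordered) list of edges of a path. -/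
def pathEdges (p : List V) : List (V × V) := p.zip p.tail

/-- The weight of a path: the sum of its edge weights. -/
def pathWeight (ℓ : V → V → ℝ) (p : List V) : ℝ :=
  ((pathEdges p).map fun e => ℓ e.1 e.2).sum

/-- `dist x y` : the minimum weight of a path from `x` to `y`
(`⊤` if there is no such path). -/
noncomputable def dist (E : V → V → Prop) (ℓ : V → V → ℝ) (x y : V) : EReal :=
  sInf {w : EReal | ∃ p : List V, IsPathFrom E p x y ∧ (pathWeight ℓ p : EReal) = w}

/-- A shortest path from `x` to `y` : a path from `x` to `y` whose weight
equals `dist x y`.  `Π(x, y)` is the set of all such paths. -/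
def IsShortestPath (E : V → V → Prop) (ℓ : V → V → ℝ) (p : List V) (x y : V) : Prop :=
  IsPathFrom E p x y ∧ (pathWeight ℓ p : EReal) = dist E ℓ x y

/-- A directed cycle: a closed walk with at least one edge whose internal
vertices are pairwise distinct. -/
def IsCycle (E : V → V → Prop) (p : List V) : Prop :=
  2 ≤ p.length ∧ p.Chain' E ∧ p.head? = p.getLast? ∧ p.tail.Nodup

/-- `G` contains no directed cycle of negative or zero total weight. -/
def NoNonposCycle (E : V → V → Prop) (ℓ : V → V → ℝ) : Prop :=
  ∀ p : List V, IsCycle E p → 0 < pathWeight ℓ p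

/-- `G` is a DAG: it contains no directed cycle. -/
def Acyclic (E : V → V → Prop) : Prop :=
  ∀ p : List V, ¬ IsCycle E p

/-- `x` precedes `y` on the path `p` (`x = y` allowed). -/
def Precedes (p : List V) (x y : V) : Prop :=
  x ∈ p ∧ y ∈ p ∧ p.idxOf x ≤ p.idxOf y

/-- `subpath p x y` : the subpath `p[x, y]` of `p` from `x` to `y`
(for `x` preceding `y` on `p`). -/
def subpath (p : List V) (x y : V) : List V :=
  (p.take (p.idxOf y + 1)).drop (p.idxOf x)

/-- Concatenation `p · q` of two paths (the last vertex of `p` coinciding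
with the first vertex of `q`). -/
def pathConcat (p q : List V) : List V := p ++ q.tail

/-- A vertex is internal to a path if it lies on it and is not an endpoint. -/
def Internal (p : List V) (v : V) : Prop :=
  v ∈ p ∧ p.head? ≠ some v ∧ p.getLast? ≠ some v

/-- Paths `p1` from `x1` to `y1` and `p2` from `x2` to `y2` are internally
vertex-disjoint: they share no vertices except possibly those in
`{x1, y1} ∩ {x2, y2}`. -/
def InternallyDisjoint (p1 : List V) (x1 y1 : V) (p2 : List V) (x2 y2 : V) : Prop :=
  ∀ u, u ∈ p1 → u ∈ p2 → u ∈ ({x1, y1} ∩ {x2, y2} : Set V)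

/-- `(a, b)` is a twin-crossing pair for paths `p1`, `p2`. -/
def TwinCrossingPair (p1 p2 : List V) (a b : V) : Prop :=
  a ≠ b ∧ Precedes p1 a b ∧ Precedes p2 a b ∧ subpath p1 a b ≠ subpath p2 a b

/-- The swap operation `φ_{a,b}(P1, P2)`. -/
def swap (p1 : List V) (x1 y1 : V) (p2 : List V) (x2 y2 : V) (a b : V) :
    List V × List V :=
  (pathConcat (pathConcat (subpath p1 x1 a) (subpath p2 a b)) (subpath p1 b y1),
   pathConcat (pathConcat (subpath p2 x2 a) (subpath p1 a b)) (subpath p2 b y2))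

/-- The graph with vertex `u` deleted. -/
def deleteVertex (E : V → V → Prop) (u : V) : V → V → Prop :=
  fun a b => E a b ∧ a ≠ u ∧ b ≠ u

/-- `u` is distance-critical for `(x, y)` : deleting `u` strictly increases
the distance from `x` to `y`. -/
def DistCritical (E : V → V → Prop) (ℓ : V → V → ℝ) (x y u : V) : Prop :=
  dist E ℓ x y < dist (deleteVertex E u) ℓ x y

/-- `Δ(x, y)` : the distance-critical vertices for `(x, y)` together with the
endpoints `x`, `y`. -/
def Delta (E : V → V → Prop) (ℓ : V → V → ℝ) (x y : V) : Set V :=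
  {u | DistCritical E ℓ x y u} ∪ {x, y}

/-- `δ(x, y) = |Δ(x, y)|`. -/
noncomputable def deltaCard (E : V → V → Prop) (ℓ : V → V → ℝ) (x y : V) : ℕ :=
  (Delta E ℓ x y).ncard

/-- `(a, b)` is a concordant pair for paths `p1` (from `x1` to `y1`) and
`p2` (from `x2` to `y2`). -/
def ConcordantPair (p1 : List V) (x1 y1 : V) (p2 : List V) (x2 y2 : V) (a b : V) : Prop :=
  a ∉ ({x1, y1} ∩ {x2, y2} : Set V) ∧ b ∉ ({x1, y1} ∩ {x2, y2} : Set V) ∧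
  Precedes p1 a b ∧ Precedes p2 a b ∧
  InternallyDisjoint (subpath p1 x1 a) x1 a (subpath p2 x2 a) x2 a ∧
  InternallyDisjoint (subpath p1 b y1) b y1 (subpath p2 b y2) b y2

/-- `𝒞(P1, P2)` : the set of concordant pairs for `(P1, P2)`. -/
def concordantSet (p1 : List V) (x1 y1 : V) (p2 : List V) (x2 y2 : V) : Set (V × V) :=
  {c | ConcordantPair p1 x1 y1 p2 x2 y2 c.1 c.2}

/-- The interaction complexity `γ(P1, P2) = Σ_{(v,w) ∈ 𝒞(P1,P2)} δ(v, w)`. -/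
noncomputable def gamma (E : V → V → Prop) (ℓ : V → V → ℝ)
    (p1 : List V) (x1 y1 : V) (p2 : List V) (x2 y2 : V) : ℕ :=
  ∑ᶠ c ∈ concordantSet p1 x1 y1 p2 x2 y2, deltaCard E ℓ c.1 c.2

/-- `E(x, y)` : the set of edges lying on at least one shortest path
from `x` to `y`. -/
def shortestEdges (E : V → V → Prop) (ℓ : V → V → ℝ) (x y : V) : Set (V × V) :=
  {e | ∃ p : List V, IsShortestPath E ℓ p x y ∧ e ∈ pathEdges p}

section Poly

variable (F : Type*) [Field F] [CharP F 2]

/-- The monomial `f(P) = ∏_{e ∈ E(P)} z_e` of a path. -/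
noncomputable def pathMon (p : List V) : MvPolynomial (V × V) F :=
  ((pathEdges p).map fun e => MvPolynomial.X e).prod

/-- The enumerating polynomial of a collection of paths. -/
noncomputable def enumPoly (S : Set (List V)) : MvPolynomial (V × V) F :=
  ∑ᶠ p ∈ S, pathMon F p

/-- The enumerating polynomial of a collection of pairs of paths. -/
noncomputable def enumPoly2 (S : Set (List V × List V)) : MvPolynomial (V × V) F :=
  ∑ᶠ q ∈ S, pathMon F q.1 * pathMon F q.2

variable (E : V → V → Prop) (ℓ : V → V → ℝ)

/-- `F(x, y)` : the enumerating polynomial of `Π(x, y)`. -/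
noncomputable def Fpoly (x y : V) : MvPolynomial (V × V) F :=
  enumPoly F {p : List V | IsShortestPath E ℓ p x y}

end Poly

variable (E : V → V → Prop) (ℓ : V → V → ℝ)

/-- The collection of internally vertex-disjoint pairs
`(P1, P2) ∈ Π(x1, y1) × Π(x2, y2)`. -/
def disjPairs (x1 y1 x2 y2 : V) : Set (List V × List V) :=
  {q | IsShortestPath E ℓ q.1 x1 y1 ∧ IsShortestPath E ℓ q.2 x2 y2 ∧
       InternallyDisjoint q.1 x1 y1 q.2 x2 y2}

/-- Pairs `(P1, P2) ∈ Π(x1, y1) × Π(x2, y2)` such that `v ∈ V(P1) ∩ V(P2)`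
and the prefix `P1[x1, v]` and the suffix `P2[v, y2]` are internally
vertex-disjoint (defining `H_v`). -/
def HvPairs (v x1 y1 x2 y2 : V) : Set (List V × List V) :=
  {q | IsShortestPath E ℓ q.1 x1 y1 ∧ IsShortestPath E ℓ q.2 x2 y2 ∧
       v ∈ q.1 ∧ v ∈ q.2 ∧
       InternallyDisjoint (subpath q.1 x1 v) x1 v (subpath q.2 v y2) v y2}

/-- Pairs `(P1, P2) ∈ Π(x1, y1) × Π(x2, y2)` such that
`(a, v) ∈ E(P1) ∩ E(P2)` and the prefix `P1[x1, a]` and the suffix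
`P2[v, y2]` are internally vertex-disjoint (defining `H_{av}`). -/
def HavPairs (a v x1 y1 x2 y2 : V) : Set (List V × List V) :=
  {q | IsShortestPath E ℓ q.1 x1 y1 ∧ IsShortestPath E ℓ q.2 x2 y2 ∧
       (a, v) ∈ pathEdges q.1 ∧ (a, v) ∈ pathEdges q.2 ∧
       InternallyDisjoint (subpath q.1 x1 a) x1 a (subpath q.2 v y2) v y2}

/-- Pairs `(P1, P2) ∈ Π(x1, y1) × Π(x2, y2)` such that `v ∈ V(P1) ∩ V(P2)`
and the prefix `P1[x1, v]` is internally vertex-disjoint from both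
`P2[x2, v]` and `P2[v, y2]` (defining `D_v`). -/
def DvPairs (v x1 y1 x2 y2 : V) : Set (List V × List V) :=
  {q | IsShortestPath E ℓ q.1 x1 y1 ∧ IsShortestPath E ℓ q.2 x2 y2 ∧
       v ∈ q.1 ∧ v ∈ q.2 ∧
       InternallyDisjoint (subpath q.1 x1 v) x1 v (subpath q.2 x2 v) x2 v ∧
       InternallyDisjoint (subpath q.1 x1 v) x1 v (subpath q.2 v y2) v y2}

/-- Pairs `(P1, P2) ∈ Π(x1, y1) × Π(x2, y2)` with interaction complexity
`γ(P1, P2) ≤ k` (defining `F_{disj,k}`). -/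
def disjkPairs (k : ℤ) (x1 y1 x2 y2 : V) : Set (List V × List V) :=
  {q | IsShortestPath E ℓ q.1 x1 y1 ∧ IsShortestPath E ℓ q.2 x2 y2 ∧
       (gamma E ℓ q.1 x1 y1 q.2 x2 y2 : ℤ) ≤ k}

/-- Pairs `(P1, P2) ∈ Π(x1, y1) × Π(x2, y2)` with `γ(P1, P2) ≤ k` such that
`(v, w) ∈ 𝒞(P1, P2)` and `(v, w)` is the concordant pair appearing first
along `P1` (defining `D_{v,w,k}`). -/
def DvwkPairs (k : ℤ) (v w x1 y1 x2 y2 : V) : Set (List V × List V) :=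
  {q | IsShortestPath E ℓ q.1 x1 y1 ∧ IsShortestPath E ℓ q.2 x2 y2 ∧
       (gamma E ℓ q.1 x1 y1 q.2 x2 y2 : ℤ) ≤ k ∧
       (v, w) ∈ concordantSet q.1 x1 y1 q.2 x2 y2 ∧
       ∀ c ∈ concordantSet q.1 x1 y1 q.2 x2 y2, q.1.idxOf v ≤ q.1.idxOf c.1}

/-- Pairs `(P1, P2) ∈ Π(x1, y1) × Π(x2, y2)` such that `v` and `w` lie on
both paths with `v` preceding `w` on both, the subpaths `P1[x1, v]` and
`P2[w, y2]` are internally vertex-disjoint, and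
`γ(P1[v, y1], P2[x2, w]) ≤ k` (defining `H_{v,w,k}`). -/
def HvwkPairs (k : ℤ) (v w x1 y1 x2 y2 : V) : Set (List V × List V) :=
  {q | IsShortestPath E ℓ q.1 x1 y1 ∧ IsShortestPath E ℓ q.2 x2 y2 ∧
       Precedes q.1 v w ∧ Precedes q.2 v w ∧
       InternallyDisjoint (subpath q.1 x1 v) x1 v (subpath q.2 w y2) w y2 ∧
       (gamma E ℓ (subpath q.1 v y1) v y1 (subpath q.2 x2 w) x2 w : ℤ) ≤ k}

/-- As `HvwkPairs`, additionally requiring the edge `(a, v)` on both paths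
(disjointness imposed on `P1[x1, a]` and `P2[w, y2]`), defining `H_{av,w,k}`. -/
def HavwkPairs (k : ℤ) (a v w x1 y1 x2 y2 : V) : Set (List V × List V) :=
  {q | IsShortestPath E ℓ q.1 x1 y1 ∧ IsShortestPath E ℓ q.2 x2 y2 ∧
       Precedes q.1 v w ∧ Precedes q.2 v w ∧
       (a, v) ∈ pathEdges q.1 ∧ (a, v) ∈ pathEdges q.2 ∧
       InternallyDisjoint (subpath q.1 x1 a) x1 a (subpath q.2 w y2) w y2 ∧
       (gamma E ℓ (subpath q.1 v y1) v y1 (subpath q.2 x2 w) x2 w : ℤ) ≤ k}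

/-- As `HvwkPairs`, additionally requiring the edge `(w, b)` on both paths
(disjointness imposed on `P1[x1, v]` and `P2[b, y2]`), defining `H_{v,wb,k}`. -/
def HvwbkPairs (k : ℤ) (v w b x1 y1 x2 y2 : V) : Set (List V × List V) :=
  {q | IsShortestPath E ℓ q.1 x1 y1 ∧ IsShortestPath E ℓ q.2 x2 y2 ∧
       Precedes q.1 v w ∧ Precedes q.2 v w ∧
       (w, b) ∈ pathEdges q.1 ∧ (w, b) ∈ pathEdges q.2 ∧
       InternallyDisjoint (subpath q.1 x1 v) x1 v (subpath q.2 b y2) b y2 ∧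
       (gamma E ℓ (subpath q.1 v y1) v y1 (subpath q.2 x2 w) x2 w : ℤ) ≤ k}

/-- As `HvwkPairs`, additionally requiring both edges `(a, v)` and `(w, b)`
on both paths (disjointness imposed on `P1[x1, a]` and `P2[b, y2]`),
defining `H_{av,wb,k}`. -/
def HavwbkPairs (k : ℤ) (a v w b x1 y1 x2 y2 : V) : Set (List V × List V) :=
  {q | IsShortestPath E ℓ q.1 x1 y1 ∧ IsShortestPath E ℓ q.2 x2 y2 ∧
       Precedes q.1 v w ∧ Precedes q.2 v w ∧
       (a, v) ∈ pathEdges q.1 ∧ (a, v) ∈ pathEdges q.2 ∧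
       (w, b) ∈ pathEdges q.1 ∧ (w, b) ∈ pathEdges q.2 ∧
       InternallyDisjoint (subpath q.1 x1 a) x1 a (subpath q.2 b y2) b y2 ∧
       (gamma E ℓ (subpath q.1 v y1) v y1 (subpath q.2 x2 w) x2 w : ℤ) ≤ k}

end DSP

namespace DSP

variable {V : Type*} {E : V → V → Prop} {ℓ : V → V → ℝ}

theorem Acyclic.nodup_of_isChain (hdag : Acyclic E) : ∀ {l : List V}, l.IsChain E → l.Nodup
  | [], _ => List.nodup_nil
  | a :: t, hc => by
    have ht : t.Nodup := hdag.nodup_of_isChain hc.tail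
    refine List.nodup_cons.2 ⟨fun ha => ?_, ht⟩
    -- the prefix of `a :: t` up to the next occurrence of `a` would be a cycle
    obtain ⟨i, hi, hti⟩ := List.getElem_of_mem ha
    refine hdag (a :: t.take (i + 1)) ⟨?_, ?_, ?_, ?_⟩
    · simp only [List.length_cons, List.length_take]; omega
    · exact hc.infix (List.take_prefix (i + 2) (a :: t)).isInfix
    · cases h : t.take (i + 1) with
      | nil => simp only [List.take_eq_nil_iff] at h; grind
      | cons b r =>
        rw [List.head?_cons, List.getLast?_cons_cons, ← h, List.getLast?_take, if_neg (by omega),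
          Nat.add_sub_cancel, List.getElem?_eq_getElem hi, hti, Option.some_or]
    · exact ht.sublist (List.take_sublist _ _)

theorem pathEdges_pathConcat : ∀ {p q : List V}, p.getLast? = q.head? →
    pathEdges (pathConcat p q) = pathEdges p ++ pathEdges q
  | [], [], _ => rfl
  | [a], q, h => by
    obtain ⟨t, rfl⟩ : ∃ t, q = a :: t := List.head?_eq_some_iff.1 h.symm
    rfl
  | a :: b :: r, q, h => by
    rw [List.getLast?_cons_cons] at h
    have ih := pathEdges_pathConcat (p := b :: r) h
    simp only [pathConcat, pathEdges, List.cons_append, List.tail_cons, List.zip_cons_cons]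
      at ih ⊢
    rw [ih]

theorem pathWeight_pathConcat {p q : List V} (h : p.getLast? = q.head?) :
    pathWeight ℓ (pathConcat p q) = pathWeight ℓ p + pathWeight ℓ q := by
  rw [pathWeight, pathEdges_pathConcat h, List.map_append, List.sum_append, pathWeight, pathWeight]

theorem isChain_pathConcat {p q : List V} (hp : p.IsChain E) (hq : q.IsChain E)
    (h : p.getLast? = q.head?) : (pathConcat p q).IsChain E := by
  refine hp.append hq.tail fun a ha b hb => ?_
  obtain ⟨t, rfl⟩ : ∃ t, q = a :: t := List.head?_eq_some_iff.1 (h ▸ ha)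
  exact (List.isChain_cons.1 hq).1 b hb

theorem getLast?_pathConcat {p q : List V} (h : p.getLast? = q.head?) :
    (pathConcat p q).getLast? = q.getLast? := by
  cases q with
  | nil => simp_all [pathConcat]
  | cons c t =>
    cases t with
    | nil => simpa [pathConcat] using h
    | cons d r =>
      rw [pathConcat, List.tail_cons, List.getLast?_append_cons, List.getLast?_cons_cons]

theorem IsPathFrom.pathConcat (hdag : Acyclic E) {p q : List V} {a m b : V}
    (hp : IsPathFrom E p a m) (hq : IsPathFrom E q m b) :
    IsPathFrom E (pathConcat p q) a b := by
  obtain ⟨⟨hp0, -, hpE⟩, hpa, hpm⟩ := hp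
  obtain ⟨⟨-, -, hqE⟩, hqm, hqb⟩ := hq
  have hmatch : p.getLast? = q.head? := hpm.trans hqm.symm
  have hchain := isChain_pathConcat hpE hqE hmatch
  refine ⟨⟨by simp [DSP.pathConcat, hp0], hdag.nodup_of_isChain hchain, hchain⟩, ?_, ?_⟩
  · simp [DSP.pathConcat, List.head?_append, hpa]
  · rw [getLast?_pathConcat hmatch, hqb]

theorem IsPathFrom.pathWeight_pathConcat {p q : List V} {a m b : V} (hp : IsPathFrom E p a m)
    (hq : IsPathFrom E q m b) :
    pathWeight ℓ (DSP.pathConcat p q) = pathWeight ℓ p + pathWeight ℓ q :=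
  DSP.pathWeight_pathConcat (hp.2.2.trans hq.2.1.symm)

theorem dist_le_pathWeight {p : List V} {a b : V} (hp : IsPathFrom E p a b) :
    dist E ℓ a b ≤ pathWeight ℓ p :=
  sInf_le ⟨p, hp, rfl⟩

variable [DecidableEq V]

theorem Precedes.trans {p : List V} {u v w : V} (h₁ : Precedes p u v) (h₂ : Precedes p v w) :
    Precedes p u w :=
  ⟨h₁.1, h₂.2.1, h₁.2.2.trans h₂.2.2⟩

theorem IsPathFrom.precedes_start {p : List V} {a b u : V} (hp : IsPathFrom E p a b)
    (hu : u ∈ p) : Precedes p a u := by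
  obtain ⟨t, rfl⟩ : ∃ t, p = a :: t := List.head?_eq_some_iff.1 hp.2.1
  exact ⟨List.mem_cons_self, hu, by simp⟩

theorem IsPathFrom.idxOf_end {p : List V} {a b : V} (hp : IsPathFrom E p a b) :
    p.idxOf b = p.length - 1 := by
  obtain ⟨hlast, hb⟩ := List.getElem?_eq_some_iff.1 (List.getLast?_eq_getElem? ▸ hp.2.2)
  rw [← hb, hp.1.2.1.idxOf_getElem]

theorem IsPathFrom.precedes_end {p : List V} {a b u : V} (hp : IsPathFrom E p a b)
    (hu : u ∈ p) : Precedes p u b :=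
  ⟨hu, List.mem_of_getLast? hp.2.2,
    hp.idxOf_end ▸ Nat.le_sub_one_of_lt (List.idxOf_lt_length_iff.2 hu)⟩

theorem subpath_head? {p : List V} {u v : V} (h : Precedes p u v) :
    (subpath p u v).head? = some u := by
  rw [subpath, List.head?_drop, List.getElem?_take, if_pos (Nat.lt_succ_of_le h.2.2),
    List.getElem?_idxOf h.1]

theorem subpath_getLast? {p : List V} {u v : V} (h : Precedes p u v) :
    (subpath p u v).getLast? = some v := by
  have huv := h.2.2
  have hv : p.idxOf v < p.length := List.idxOf_lt_length_iff.2 h.2.1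
  rw [subpath, List.getLast?_drop, if_neg (by rw [List.length_take]; omega), List.getLast?_take,
    if_neg (by omega), Nat.add_sub_cancel, List.getElem?_idxOf h.2.1, Option.some_or]

theorem pathConcat_subpath {p : List V} {u v w : V} (h₁ : Precedes p u v)
    (h₂ : Precedes p v w) :
    pathConcat (subpath p u v) (subpath p v w) = subpath p u w := by
  have hw : p.idxOf w < p.length := List.idxOf_lt_length_iff.2 h₂.2.1
  have huv := h₁.2.2
  have hvw := h₂.2.2
  set L := p.take (p.idxOf w + 1)
  have hv : p.take (p.idxOf v + 1) = L.take (p.idxOf v + 1) := by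
    rw [List.take_take, min_eq_left (by omega)]
  rw [pathConcat, subpath, subpath, subpath, List.tail_drop, hv,
    ← List.drop_append_of_le_length (by simp [L]; omega), List.take_append_drop]

theorem IsPathFrom.subpath_eq_self {p : List V} {a b : V} (hp : IsPathFrom E p a b) :
    subpath p a b = p := by
  obtain ⟨t, rfl⟩ : ∃ t, p = a :: t := List.head?_eq_some_iff.1 hp.2.1
  rw [subpath, hp.idxOf_end, List.idxOf_cons_self, List.drop_zero]
  simp

theorem IsPath.subpath {p : List V} {u v : V} (hp : IsPath E p) (h : Precedes p u v) :
    IsPathFrom E (subpath p u v) u v :=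
  have hinf : DSP.subpath p u v <:+: p :=
    (List.drop_suffix _ _).isInfix.trans (List.take_prefix _ _).isInfix
  ⟨⟨fun h0 => by simpa [h0] using subpath_head? h, hp.2.1.sublist hinf.sublist,
      hp.2.2.infix hinf⟩,
    subpath_head? h, subpath_getLast? h⟩

theorem pathWeight_subpath_add {p : List V} {u v w : V} (h₁ : Precedes p u v)
    (h₂ : Precedes p v w) :
    pathWeight ℓ (subpath p u v) + pathWeight ℓ (subpath p v w)
      = pathWeight ℓ (subpath p u w) := by
  rw [← pathConcat_subpath h₁ h₂,
    pathWeight_pathConcat ((subpath_getLast? h₁).trans (subpath_head? h₂).symm)]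

theorem IsShortestPath.subpath (hdag : Acyclic E) {p : List V} {a b u v : V}
    (hp : IsShortestPath E ℓ p a b) (h : Precedes p u v) :
    IsShortestPath E ℓ (subpath p u v) u v := by
  have hau := hp.1.precedes_start h.1
  have hvb := hp.1.precedes_end h.2.1
  refine ⟨hp.1.1.subpath h, le_antisymm (le_sInf ?_) (dist_le_pathWeight (hp.1.1.subpath h))⟩
  rintro _ ⟨q, hq, rfl⟩
  have hpre := hp.1.1.subpath hau
  have hsuf := hp.1.1.subpath hvb
  have hsplit : pathWeight ℓ (DSP.subpath p a u) + pathWeight ℓ (DSP.subpath p u v)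
      + pathWeight ℓ (DSP.subpath p v b) = pathWeight ℓ p := by
    rw [pathWeight_subpath_add hau h, pathWeight_subpath_add (hau.trans h) hvb,
      hp.1.subpath_eq_self]
  -- `p` is no heavier than the detour `p[a, u] · q · p[v, b]`
  have hdetour := dist_le_pathWeight (ℓ := ℓ) ((hpre.pathConcat hdag hq).pathConcat hdag hsuf)
  rw [← hp.2, ← hsplit, (hpre.pathConcat hdag hq).pathWeight_pathConcat hsuf,
    hpre.pathWeight_pathConcat hq, EReal.coe_le_coe_iff] at hdetour
  exact EReal.coe_le_coe_iff.2 (by linarith)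

end DSP

namespace DSP

variable {V : Type*} [Fintype V] [DecidableEq V]

variable (E : V → V → Prop) (ℓ : V → V → ℝ)

theorem concat_through_segment_is_shortest
    (hdag : Acyclic E) (s1 t1 s2 t2 x y : V) (P Qx Qy : List V)
    (hP : IsShortestPath E ℓ P s1 t1) (hxy : Precedes P x y)
    (hQx : IsShortestPath E ℓ Qx s2 t2) (hxQ : x ∈ Qx)
    (hQy : IsShortestPath E ℓ Qy s2 t2) (hyQ : y ∈ Qy)
    (hd : dist E ℓ s1 y - dist E ℓ s1 x = dist E ℓ s2 y - dist E ℓ s2 x) :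
    IsShortestPath E ℓ
      (pathConcat (pathConcat (subpath Qx s2 x) (subpath P x y)) (subpath Qy y t2))
      s2 t2 := by
  have hs1x := hP.1.precedes_start hxy.1
  have hs2x := hQx.1.precedes_start hxQ
  have hs2y := hQy.1.precedes_start hyQ
  have hyt2 := hQy.1.precedes_end hyQ
  have hseg : pathWeight ℓ (subpath P x y)
      = pathWeight ℓ (subpath Qy s2 y) - pathWeight ℓ (subpath Qx s2 x) := by
    rw [← (hP.subpath hdag hs1x).2, ← (hP.subpath hdag (hs1x.trans hxy)).2,
      ← (hQx.subpath hdag hs2x).2, ← (hQy.subpath hdag hs2y).2,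
      ← EReal.coe_sub, ← EReal.coe_sub, EReal.coe_eq_coe_iff, ← pathWeight_subpath_add hs1x hxy] at hd
    linarith
  have hQy_split : pathWeight ℓ (subpath Qy s2 y) + pathWeight ℓ (subpath Qy y t2)
      = pathWeight ℓ Qy := by
    rw [pathWeight_subpath_add hs2y hyt2, hQy.1.subpath_eq_self]
  have hA := hQx.1.1.subpath hs2x
  have hM := hP.1.1.subpath hxy
  have hB := hQy.1.1.subpath hyt2
  have hAM := hA.pathConcat hdag hM
  refine ⟨hAM.pathConcat hdag hB, ?_⟩
  rw [hAM.pathWeight_pathConcat hB, hA.pathWeight_pathConcat hM, hseg, ← hQy.2, ← hQy_split]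
  congr 1
  ring

end DSP
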